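/- Consider gradient descent k^(i)_{t+1} = k^(i)_t - η·∂L/∂k^(i)|_{K_t, W_0} on the population loss of the two-layer linear network under the hierarchical generative model. Then for every t ≥ 0, every kernel index i, every class c ∈ C, and every pair of patches x1, x2 ∈ S_c: |⟨k^(i)_{t+1}, x1⟩ - ⟨k^(i)_{t+1}, x2⟩| = |⟨k^(i)_t, x1⟩ - ⟨k^(i)_t, x2⟩|. That is, the within-class activation gap is invariant under gradient steps. -/

import Mathlib

open scoped RealInnerProductSpace
open Finset
open scoped Classical

/-- The two-layer convolutional network `N_{K,W}(X) = Σᵢ Σⱼ W i j ⟨k⁽ⁱ⁾, x⁽ʲ⁾⟩`,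
with `X` given by its columns. -/
noncomputable def twoLayerNet {l m n : ℕ} (K : Fin n → EuclideanSpace ℝ (Fin l))
    (W : Fin n → EuclideanSpace ℝ (Fin m))
    (X : Fin m → EuclideanSpace ℝ (Fin l)) : ℝ :=
  ∑ i : Fin n, ∑ j : Fin m, W i j * ⟪K i, X j⟫

/-- The population loss `L_{K,W} = E_{(X,y)~G}[-y·N_{K,W}(X)]` of the generative model:
`y` uniform on `{±1}`, latent image `z ~ D_y`, and, given `z`, column `j` of `X` drawn
uniformly and independently from the size-`d` set `S_{z_j}`. -/
noncomputable def popLoss {Cls : Type} [Fintype Cls] {l m n : ℕ}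
    (D : ℝ → (Fin m → Cls) → ℝ) (S : Cls → Finset (EuclideanSpace ℝ (Fin l))) (d : ℕ)
    (K : Fin n → EuclideanSpace ℝ (Fin l)) (W : Fin n → EuclideanSpace ℝ (Fin m)) : ℝ :=
  (1 / 2 : ℝ) * ∑ y ∈ ({-1, 1} : Finset ℝ), ∑ z : Fin m → Cls, D y z *
    ∑ ξ : (∀ j : Fin m, {x // x ∈ S (z j)}),
      ((1 : ℝ) / d) ^ m * (-y * twoLayerNet K W fun j => (ξ j : EuclideanSpace ℝ (Fin l)))

/-- The 'mean image' `v_c = E_{(z,y)}[-y·F_c(z)] ∈ ℝᵐ` of the semantic class `c`. -/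
noncomputable def meanImg {Cls : Type} [Fintype Cls] [DecidableEq Cls] {m : ℕ}
    (D : ℝ → (Fin m → Cls) → ℝ) (c : Cls) : EuclideanSpace ℝ (Fin m) :=
  WithLp.toLp 2 fun j => (1 / 2 : ℝ) * ∑ y ∈ ({-1, 1} : Finset ℝ), ∑ z : Fin m → Cls,
    D y z * (-y * if z j = c then 1 else 0)

/-- Gradient descent on the population loss, updating only the kernel columns `K` while the
second layer `W₀` stays fixed: `k⁽ⁱ⁾_{t+1} = k⁽ⁱ⁾_t - η·∂L/∂k⁽ⁱ⁾|_{K_t,W₀}`. -/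
noncomputable def gdIter {Cls : Type} [Fintype Cls] {l m n : ℕ}
    (D : ℝ → (Fin m → Cls) → ℝ) (S : Cls → Finset (EuclideanSpace ℝ (Fin l))) (d : ℕ)
    (η : ℝ) (W0 : Fin n → EuclideanSpace ℝ (Fin m))
    (K0 : Fin n → EuclideanSpace ℝ (Fin l)) : ℕ → Fin n → EuclideanSpace ℝ (Fin l)
  | 0 => K0
  | (t + 1) => fun i =>
      gdIter D S d η W0 K0 t i -
        η • gradient
          (fun k => popLoss D S d (Function.update (gdIter D S d η W0 K0 t) i k) W0)
          (gdIter D S d η W0 K0 t i)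

/- ### Auxiliary machinery -/

lemma hasGradientAt_inner_add_const' {F : Type*} [NormedAddCommGroup F]
    [InnerProductSpace ℝ F] [CompleteSpace F] (g : F) (C : ℝ) (x : F) :
    HasGradientAt (fun k => ⟪g, k⟫ + C) g x := by
  rw [hasGradientAt_iff_hasFDerivAt]
  have h : (InnerProductSpace.toDual ℝ F g : F →L[ℝ] ℝ) = innerSL ℝ g := by
    ext y; simp [InnerProductSpace.toDual_apply_apply]
  rw [h]
  exact ((innerSL ℝ g).hasFDerivAt).add_const C

/-- The constant gradient vector of the population loss w.r.t. kernel `i`. -/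
noncomputable def gVec {Cls : Type} [Fintype Cls] {l m n : ℕ}
    (D : ℝ → (Fin m → Cls) → ℝ) (S : Cls → Finset (EuclideanSpace ℝ (Fin l))) (d : ℕ)
    (W0 : Fin n → EuclideanSpace ℝ (Fin m)) (i : Fin n) : EuclideanSpace ℝ (Fin l) :=
  (1 / 2 : ℝ) • ∑ y ∈ ({-1, 1} : Finset ℝ), ∑ z : Fin m → Cls, D y z •
    ∑ ξ : (∀ j : Fin m, {x // x ∈ S (z j)}),
      (((1 : ℝ) / d) ^ m * (-y)) • ∑ j : Fin m, W0 i j • (ξ j : EuclideanSpace ℝ (Fin l))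

lemma net_update' {l m n : ℕ} (K : Fin n → EuclideanSpace ℝ (Fin l))
    (W : Fin n → EuclideanSpace ℝ (Fin m)) (i : Fin n)
    (k : EuclideanSpace ℝ (Fin l)) (X : Fin m → EuclideanSpace ℝ (Fin l)) :
    twoLayerNet (Function.update K i k) W X
      = (∑ j : Fin m, W i j * ⟪k, X j⟫) + twoLayerNet (Function.update K i 0) W X := by
  unfold twoLayerNet
  rw [Fintype.sum_eq_add_sum_compl i, Fintype.sum_eq_add_sum_compl i
    (fun i' => ∑ j : Fin m, W i' j * ⟪Function.update K i 0 i', X j⟫)]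
  simp only [Function.update_self, inner_zero_left, mul_zero, Finset.sum_const_zero, zero_add]
  congr 1
  refine Finset.sum_congr rfl fun i' hi' => ?_
  rw [Finset.mem_compl, Finset.mem_singleton] at hi'
  rw [Function.update_of_ne hi', Function.update_of_ne hi']

lemma popLoss_update' {Cls : Type} [Fintype Cls] {l m n d : ℕ}
    (D : ℝ → (Fin m → Cls) → ℝ) (S : Cls → Finset (EuclideanSpace ℝ (Fin l)))
    (W0 : Fin n → EuclideanSpace ℝ (Fin m)) (K : Fin n → EuclideanSpace ℝ (Fin l))
    (i : Fin n) (k : EuclideanSpace ℝ (Fin l)) :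
    popLoss D S d (Function.update K i k) W0
      = ⟪gVec D S d W0 i, k⟫ + popLoss D S d (Function.update K i 0) W0 := by
  have hg : ⟪gVec D S d W0 i, k⟫
      = (1/2:ℝ) * ∑ y ∈ ({-1,1}:Finset ℝ), ∑ z : Fin m → Cls, D y z *
          ∑ ξ : (∀ j : Fin m, {x // x ∈ S (z j)}),
            (((1:ℝ)/d)^m * (-y)) * ∑ j : Fin m, W0 i j * ⟪k, (ξ j : EuclideanSpace ℝ (Fin l))⟫ := by
    unfold gVec
    rw [real_inner_smul_left]
    congr 1
    rw [sum_inner]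
    refine Finset.sum_congr rfl fun y _ => ?_
    rw [sum_inner]
    refine Finset.sum_congr rfl fun z _ => ?_
    rw [real_inner_smul_left]
    congr 1
    rw [sum_inner]
    refine Finset.sum_congr rfl fun xi _ => ?_
    rw [real_inner_smul_left]
    congr 1
    rw [sum_inner]
    refine Finset.sum_congr rfl fun j _ => ?_
    rw [real_inner_smul_left, real_inner_comm]
  rw [hg]
  unfold popLoss
  rw [← mul_add]
  congr 1
  rw [← Finset.sum_add_distrib]
  refine Finset.sum_congr rfl fun y _ => ?_
  rw [← Finset.sum_add_distrib]
  refine Finset.sum_congr rfl fun z _ => ?_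
  rw [← mul_add]
  congr 1
  rw [← Finset.sum_add_distrib]
  refine Finset.sum_congr rfl fun xi _ => ?_
  rw [net_update']
  ring

lemma gradient_popLoss_eq {Cls : Type} [Fintype Cls] {l m n d : ℕ}
    (D : ℝ → (Fin m → Cls) → ℝ) (S : Cls → Finset (EuclideanSpace ℝ (Fin l)))
    (W0 : Fin n → EuclideanSpace ℝ (Fin m)) (K : Fin n → EuclideanSpace ℝ (Fin l))
    (i : Fin n) (k0 : EuclideanSpace ℝ (Fin l)) :
    gradient (fun k => popLoss D S d (Function.update K i k) W0) k0 = gVec D S d W0 i := by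
  have h : (fun k => popLoss D S d (Function.update K i k) W0)
      = fun k => ⟪gVec D S d W0 i, k⟫ + popLoss D S d (Function.update K i 0) W0 :=
    funext fun k => popLoss_update' D S W0 K i k
  rw [h]
  exact (hasGradientAt_inner_add_const' _ _ _).gradient

lemma gVec_inner_eq {Cls : Type} [Fintype Cls] [DecidableEq Cls] {l m n d : ℕ}
    (D : ℝ → (Fin m → Cls) → ℝ) (S : Cls → Finset (EuclideanSpace ℝ (Fin l)))
    (hdisj : ∀ c1 c2, c1 ≠ c2 → Disjoint (S c1) (S c2))
    (horth : ∀ c1 c2, ∀ u ∈ S c1, ∀ v ∈ S c2, ⟪u, v⟫ = if u = v then (1 : ℝ) else 0)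
    (W0 : Fin n → EuclideanSpace ℝ (Fin m)) (i : Fin n) (c : Cls)
    (x1 : EuclideanSpace ℝ (Fin l)) (hx1 : x1 ∈ S c)
    (x2 : EuclideanSpace ℝ (Fin l)) (hx2 : x2 ∈ S c) :
    ⟪gVec D S d W0 i, x1⟫ = ⟪gVec D S d W0 i, x2⟫ := by
  have hiff : ∀ c' (a : EuclideanSpace ℝ (Fin l)),
      a ∈ S c' ↔ Equiv.swap x1 x2 a ∈ S c' := by
    intro c' a
    have key : x1 ∈ S c' ↔ x2 ∈ S c' := by
      by_cases h : c' = c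
      · subst h; simp [hx1, hx2]
      · have hd := hdisj c' c h
        constructor
        · intro h1; exact absurd hx1 (Finset.disjoint_left.mp hd h1)
        · intro h2; exact absurd hx2 (Finset.disjoint_left.mp hd h2)
    by_cases h1 : a = x1
    · subst h1; rw [Equiv.swap_apply_left]; exact key
    by_cases h2 : a = x2
    · subst h2; rw [Equiv.swap_apply_right]; exact key.symm
    · rw [Equiv.swap_apply_of_ne_of_ne h1 h2]
  unfold gVec
  simp only [real_inner_smul_left, sum_inner]
  congr 1
  refine Finset.sum_congr rfl fun y _ => ?_
  refine Finset.sum_congr rfl fun z _ => ?_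
  congr 1
  refine Fintype.sum_equiv
    (Equiv.piCongrRight fun j => (Equiv.swap x1 x2).subtypeEquiv (hiff (z j))) _ _ fun ξ => ?_
  simp only [Equiv.piCongrRight_apply, Pi.map_apply, Equiv.subtypeEquiv_apply]
  congr 1
  refine Finset.sum_congr rfl fun j _ => ?_
  congr 1
  rw [horth (z j) c (ξ j) (ξ j).2 x1 hx1,
    horth (z j) c (Equiv.swap x1 x2 (ξ j)) ((hiff (z j) (ξ j)).mp (ξ j).2) x2 hx2]
  have hsw : (Equiv.swap x1 x2 ((ξ j : EuclideanSpace ℝ (Fin l))) = x2)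
      ↔ ((ξ j : EuclideanSpace ℝ (Fin l)) = x1) := by
    rw [Equiv.apply_eq_iff_eq_symm_apply, Equiv.symm_swap, Equiv.swap_apply_right]
  simp [hsw]

/-- under gradient descent on the population loss of the two-layer network in
the hierarchical generative model, the within-class activation gap is invariant: for all
`t`, `i`, classes `c` and patches `x₁, x₂ ∈ S_c`,
`|⟨k⁽ⁱ⁾_{t+1},x₁⟩ - ⟨k⁽ⁱ⁾_{t+1},x₂⟩| = |⟨k⁽ⁱ⁾_t,x₁⟩ - ⟨k⁽ⁱ⁾_t,x₂⟩|`. -/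
theorem stmt6 {Cls : Type} [Fintype Cls] [DecidableEq Cls] {l m n d : ℕ} (hd : 0 < d)
    (D : ℝ → (Fin m → Cls) → ℝ)
    (hD : ∀ y ∈ ({-1, 1} : Finset ℝ),
      (∀ z, 0 ≤ D y z) ∧ ∑ z : Fin m → Cls, D y z = 1)
    (S : Cls → Finset (EuclideanSpace ℝ (Fin l)))
    (hcard : ∀ c, (S c).card = d)
    (hdisj : ∀ c1 c2, c1 ≠ c2 → Disjoint (S c1) (S c2))
    (horth : ∀ c1 c2, ∀ u ∈ S c1, ∀ v ∈ S c2, ⟪u, v⟫ = if u = v then (1 : ℝ) else 0)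
    (η : ℝ) (W0 : Fin n → EuclideanSpace ℝ (Fin m))
    (K0 : Fin n → EuclideanSpace ℝ (Fin l))
    (t : ℕ) (i : Fin n) (c : Cls)
    (x1 : EuclideanSpace ℝ (Fin l)) (hx1 : x1 ∈ S c)
    (x2 : EuclideanSpace ℝ (Fin l)) (hx2 : x2 ∈ S c) :
    |⟪gdIter D S d η W0 K0 (t + 1) i, x1⟫ - ⟪gdIter D S d η W0 K0 (t + 1) i, x2⟫|
      = |⟪gdIter D S d η W0 K0 t i, x1⟫ - ⟪gdIter D S d η W0 K0 t i, x2⟫| := by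
  have hstep : gdIter D S d η W0 K0 (t + 1) i
      = gdIter D S d η W0 K0 t i - η • gVec D S d W0 i := by
    conv_lhs => rw [gdIter]
    beta_reduce
    rw [gradient_popLoss_eq]
  rw [hstep]
  rw [inner_sub_left, inner_sub_left, real_inner_smul_left, real_inner_smul_left,
    gVec_inner_eq D S hdisj horth W0 i c x1 hx1 x2 hx2]
  congr 1
  ring
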